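/- Let R = [[-1/2, √3/2], [-√3/2, -1/2]] and τ = exp(2πi/3). Let B : ℝ² → M₂(ℂ) be measurable with B(R⁻¹x) = R⁻¹ B(x) R for all x ∈ ℝ², and let E ⊆ ℝ² be a measurable set with R⁻¹(E) = E. Let w₁, w₂ : ℝ² → ℂ be differentiable with w₁(R⁻¹x) = τ·w₁(x) and w₂(R⁻¹x) = conj(τ)·w₂(x) for all x ∈ ℝ². Assume that g(x) := conj(∇w₂(x))ᵀ B(x) ∇w₁(x) is integrable on E. Then ∫_E g(x) dx = 0. -/

import Mathlib

/-!
The symmetry hypotheses make the integrand `g` an eigenfunction of the rotation: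
`∇w₁(R⁻¹x) = τ R⁻¹ ∇w₁(x)`, `∇w₂(R⁻¹x) = conj τ R⁻¹ ∇w₂(x)`, and the unitary `R⁻¹`
cancels against the conjugation `B(R⁻¹x) = R⁻¹ B(x) R`, so `g(R⁻¹x) = τ² g(x)`.
Since `x ↦ R x` preserves Lebesgue measure and `E`, the integral of `g` over `E` equals
`τ²` times itself, and `τ² ≠ 1` forces it to vanish.
-/

open Complex ComplexConjugate MeasureTheory

/-- The clockwise rotation by `2π/3`: `R = [[-1/2, √3/2],[-√3/2, -1/2]]`. -/
noncomputable def Rm : Matrix (Fin 2) (Fin 2) ℝ :=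
  !![-(1/2), Real.sqrt 3 / 2; -(Real.sqrt 3) / 2, -(1/2)]

/-- `R` regarded as a complex matrix. -/
noncomputable def Rc : Matrix (Fin 2) (Fin 2) ℂ := Rm.map Complex.ofReal

/-- `τ = exp(2πi/3)`. -/
noncomputable def τ : ℂ := Complex.exp (2 * Real.pi * Complex.I / 3)

/-- The gradient of a function `w : ℝ² → ℂ`: the vector of its partial derivatives at `x`. -/
noncomputable def grad (w : (Fin 2 → ℝ) → ℂ) (x : Fin 2 → ℝ) : Fin 2 → ℂ :=
  fun i => fderiv ℝ w x (Pi.single i 1)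

open Matrix

theorem MeasureTheory.setIntegral_eq_zero_of_eq_mul_comp {α 𝕜 : Type*} [MeasurableSpace α]
    [RCLike 𝕜] {μ : Measure α} {T : α → α} (hT : MeasurePreserving T μ μ)
    (hTe : MeasurableEmbedding T) {E : Set α} (hE : T ⁻¹' E = E) {f : α → 𝕜} {c : 𝕜}
    (hc : c ≠ 1) (hf : ∀ x, f x = c * f (T x)) :
    ∫ x in E, f x ∂μ = 0 := by
  have h : ∫ x in E, f x ∂μ = c * ∫ x in E, f x ∂μ := calc
    ∫ x in E, f x ∂μ = c * ∫ x in T ⁻¹' E, f (T x) ∂μ := by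
      rw [hE, ← integral_const_mul]; exact integral_congr_ae (.of_forall hf)
    _ = c * ∫ x in E, f x ∂μ := by rw [hT.setIntegral_preimage_emb hTe]
  have : (1 - c) * ∫ x in E, f x ∂μ = 0 := by linear_combination h
  exact (mul_eq_zero.mp this).resolve_left (sub_ne_zero.mpr hc.symm)

theorem Matrix.measurePreserving_mulVec {ι : Type*} [Fintype ι] [DecidableEq ι]
    {A : Matrix ι ι ℝ} (hA : |A.det| = 1) : MeasurePreserving A.mulVec volume volume := by
  refine ⟨(toLin' A).continuous_of_finiteDimensional.measurable, ?_⟩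
  have hdet : A.det ≠ 0 := by rintro h; simp [h] at hA
  have := Real.map_matrix_volume_pi_eq_smul_volume_pi hdet
  rw [abs_inv, hA, inv_one, ENNReal.ofReal_one, one_smul] at this
  exact this

theorem Matrix.measurableEmbedding_mulVec {ι : Type*} [Fintype ι] [DecidableEq ι]
    {A : Matrix ι ι ℝ} (hA : A.det ≠ 0) : MeasurableEmbedding A.mulVec :=
  ((toLin' A).isClosedEmbedding_of_injective
    (LinearMap.ker_eq_bot.mpr (mulVec_injective_of_det_ne_zero hA))).measurableEmbedding

theorem Matrix.star_map_ofReal {n : Type*} (A : Matrix n n ℝ) :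
    star (A.map ofReal) = Aᵀ.map ofReal := by
  rw [star_eq_conjTranspose, ← conjTranspose_map _ (fun _ => (conj_ofReal _).symm),
    conjTranspose_eq_transpose_of_trivial]

theorem Matrix.map_ofReal_mem_unitaryGroup {n : Type*} [Fintype n] [DecidableEq n]
    {A : Matrix n n ℝ} (hA : A * Aᵀ = 1) : A.map ofReal ∈ unitaryGroup n ℂ := by
  rw [mem_unitaryGroup_iff, star_map_ofReal]
  change A.map ofRealHom * Aᵀ.map ofRealHom = 1
  rw [← Matrix.map_mul, hA, Matrix.map_one _ (map_zero _) (map_one _)]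

theorem Matrix.sum_sum_conj_mul_mul_eq_star_dotProduct {n : Type*} [Fintype n]
    (M : Matrix n n ℂ) (u v : n → ℂ) :
    ∑ k, ∑ l, conj (u k) * M k l * v l = star u ⬝ᵥ M *ᵥ v := by
  simp [dotProduct, mulVec, Finset.mul_sum, mul_assoc]

theorem Matrix.star_smul_mulVec_dotProduct_unitary_conj {n : Type*} [Fintype n] [DecidableEq n]
    {U : Matrix n n ℂ} (hU : U ∈ unitaryGroup n ℂ) (M : Matrix n n ℂ) (u v : n → ℂ) (a b : ℂ) :
    star (a • U *ᵥ u) ⬝ᵥ (U * M * star U) *ᵥ (b • U *ᵥ v) = conj a * b * (star u ⬝ᵥ M *ᵥ v) := by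
  have hU' : star U * U = 1 := mem_unitaryGroup_iff'.mp hU
  rw [star_smul, star_mulVec, mulVec_smul, smul_dotProduct, dotProduct_smul, mulVec_mulVec,
    mul_assoc, mul_assoc, hU', mul_one, dotProduct_mulVec, vecMul_vecMul, ← star_eq_conjTranspose,
    ← mul_assoc, hU', one_mul, ← dotProduct_mulVec]
  simp only [smul_eq_mul, RCLike.star_def]
  ring

theorem fderiv_apply_eq_sum_grad (w : (Fin 2 → ℝ) → ℂ) (x v : Fin 2 → ℝ) :
    fderiv ℝ w x v = ∑ j, v j * grad w x j := by
  conv_lhs => rw [pi_eq_sum_univ v, map_sum]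
  refine Finset.sum_congr rfl fun j _ => ?_
  rw [map_smul, real_smul, grad]
  congr
  funext k
  simp [Pi.single_apply, eq_comm]

/-- The chain rule gives `Aᵀ ∇w(A x) = c ∇w(x)`, which `A Aᵀ = 1` inverts. -/
theorem grad_mulVec_of_comp_eq_mul {A : Matrix (Fin 2) (Fin 2) ℝ} (hA : A * Aᵀ = 1)
    {w : (Fin 2 → ℝ) → ℂ} {c : ℂ} (hw : Differentiable ℝ w) (h : ∀ x, w (A *ᵥ x) = c * w x)
    (x : Fin 2 → ℝ) : grad w (A *ᵥ x) = c • A.map ofReal *ᵥ grad w x := by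
  let L : (Fin 2 → ℝ) →L[ℝ] Fin 2 → ℝ := LinearMap.toContinuousLinearMap (toLin' A)
  have hchain : (fderiv ℝ w (A *ᵥ x)).comp L = c • fderiv ℝ w x := by
    have hcomp : HasFDerivAt (fun y => w (A *ᵥ y)) ((fderiv ℝ w (A *ᵥ x)).comp L) x :=
      (hw (A *ᵥ x)).hasFDerivAt.comp x L.hasFDerivAt
    simp only [h] at hcomp
    exact hcomp.unique ((hw x).hasFDerivAt.const_mul c)
  funext i
  have hi : Pi.single i 1 = A *ᵥ (Aᵀ *ᵥ Pi.single i 1) := by rw [mulVec_mulVec, hA, one_mulVec]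
  calc grad w (A *ᵥ x) i = ((fderiv ℝ w (A *ᵥ x)).comp L) (Aᵀ *ᵥ Pi.single i 1) := by
        rw [grad]; conv_lhs => rw [hi]
        rfl
    _ = (c • A.map ofReal *ᵥ grad w x) i := by
        rw [hchain, _root_.smul_apply, fderiv_apply_eq_sum_grad, mulVec_single_one]
        simp only [Pi.smul_apply, smul_eq_mul, mulVec, dotProduct, col_apply, transpose_apply,
          map_apply]

theorem Rm_mul_transpose : Rm * Rmᵀ = 1 := by
  have h : Real.sqrt 3 * Real.sqrt 3 = 3 := Real.mul_self_sqrt (by norm_num)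
  ext i j
  fin_cases i <;> fin_cases j <;> simp [Rm, mul_apply, Fin.sum_univ_two] <;> linarith

theorem Rm_det : Rm.det = 1 := by
  have h : Real.sqrt 3 * Real.sqrt 3 = 3 := Real.mul_self_sqrt (by norm_num)
  rw [Rm, det_fin_two_of]
  linear_combination h / 4

theorem Rm_transpose_mul : Rmᵀ * Rm = 1 := mul_eq_one_comm.mp Rm_mul_transpose

theorem Rm_inv : Rm⁻¹ = Rmᵀ := inv_eq_right_inv Rm_mul_transpose

theorem Rm_inv_mulVec_mulVec (x : Fin 2 → ℝ) : Rm⁻¹ *ᵥ Rm *ᵥ x = x := by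
  rw [mulVec_mulVec, Rm_inv, Rm_transpose_mul, one_mulVec]

theorem Rc_mem_unitaryGroup : Rc ∈ unitaryGroup (Fin 2) ℂ :=
  map_ofReal_mem_unitaryGroup Rm_mul_transpose

theorem Rc_inv : Rc⁻¹ = star Rc := inv_eq_right_inv (mem_unitaryGroup_iff.mp Rc_mem_unitaryGroup)

theorem grad_Rm_inv_mulVec {w : (Fin 2 → ℝ) → ℂ} {c : ℂ} (hw : Differentiable ℝ w)
    (h : ∀ x, w (Rm⁻¹ *ᵥ x) = c * w x) (x : Fin 2 → ℝ) :
    grad w (Rm⁻¹ *ᵥ x) = c • star Rc *ᵥ grad w x := by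
  have hA : Rm⁻¹ * Rm⁻¹ᵀ = 1 := by rw [Rm_inv, transpose_transpose, Rm_transpose_mul]
  rw [grad_mulVec_of_comp_eq_mul hA hw h, Rm_inv, Rc, star_map_ofReal]

theorem tau_sq_ne_one : τ ^ 2 ≠ 1 := by
  have h := Complex.isPrimitiveRoot_exp 3 three_ne_zero
  push_cast at h
  exact h.pow_ne_one_of_pos_of_lt two_ne_zero (by norm_num)

theorem statement7_general (B : (Fin 2 → ℝ) → Matrix (Fin 2) (Fin 2) ℂ)
    (hBsym : ∀ x, B (Rm⁻¹.mulVec x) = Rc⁻¹ * B x * Rc)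
    (E : Set (Fin 2 → ℝ)) (hER : Rm.mulVec ⁻¹' E = E)
    (w₁ w₂ : (Fin 2 → ℝ) → ℂ) (hw₁ : Differentiable ℝ w₁) (hw₂ : Differentiable ℝ w₂)
    (hw₁R : ∀ x, w₁ (Rm⁻¹.mulVec x) = τ * w₁ x)
    (hw₂R : ∀ x, w₂ (Rm⁻¹.mulVec x) = (starRingEnd ℂ) τ * w₂ x) :
    (∫ x in E, ∑ k : Fin 2, ∑ l : Fin 2, conj (grad w₂ x k) * B x k l * grad w₁ x l) = 0 := by
  set f : (Fin 2 → ℝ) → ℂ :=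
    fun x => ∑ k : Fin 2, ∑ l : Fin 2, conj (grad w₂ x k) * B x k l * grad w₁ x l
  have hf : ∀ x, f (Rm⁻¹ *ᵥ x) = τ ^ 2 * f x := fun x => by
    have hB : B (Rm⁻¹ *ᵥ x) = star Rc * B x * star (star Rc) := by rw [hBsym, Rc_inv, star_star]
    simp only [f, sum_sum_conj_mul_mul_eq_star_dotProduct, grad_Rm_inv_mulVec hw₁ hw₁R,
      grad_Rm_inv_mulVec hw₂ hw₂R, hB,
      star_smul_mulVec_dotProduct_unitary_conj (Unitary.star_mem Rc_mem_unitaryGroup), conj_conj, sq]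
  refine setIntegral_eq_zero_of_eq_mul_comp (measurePreserving_mulVec (by rw [Rm_det, abs_one]))
    (measurableEmbedding_mulVec (by rw [Rm_det]; exact one_ne_zero)) hER tau_sq_ne_one fun x => ?_
  rw [← hf, Rm_inv_mulVec_mulVec]

/-- under rotational invariance of `B` and of `E`, and rotation
eigenvalues `τ`, `conj τ` for `w₁`, `w₂`, the off-diagonal integral
`∫_E conj(∇w₂)ᵀ B ∇w₁` vanishes. -/
theorem statement7 (B : (Fin 2 → ℝ) → Matrix (Fin 2) (Fin 2) ℂ)
    (hBmeas : ∀ k l, Measurable fun x => B x k l)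
    (hBsym : ∀ x, B (Rm⁻¹.mulVec x) = Rc⁻¹ * B x * Rc)
    (E : Set (Fin 2 → ℝ)) (hE : MeasurableSet E) (hER : Rm.mulVec ⁻¹' E = E)
    (w₁ w₂ : (Fin 2 → ℝ) → ℂ) (hw₁ : Differentiable ℝ w₁) (hw₂ : Differentiable ℝ w₂)
    (hw₁R : ∀ x, w₁ (Rm⁻¹.mulVec x) = τ * w₁ x)
    (hw₂R : ∀ x, w₂ (Rm⁻¹.mulVec x) = (starRingEnd ℂ) τ * w₂ x)
    (hint : IntegrableOn
      (fun x => ∑ k : Fin 2, ∑ l : Fin 2, conj (grad w₂ x k) * B x k l * grad w₁ x l) E) :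
    (∫ x in E, ∑ k : Fin 2, ∑ l : Fin 2, conj (grad w₂ x k) * B x k l * grad w₁ x l) = 0 :=
  statement7_general B hBsym E hER w₁ w₂ hw₁ hw₂ hw₁R hw₂R
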